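/- Let C be a hereditary class of graphs that is closed under edge addition. Then: (1) C is closed under induced minors; (2) G_C is closed under induced minors; and (3) G_C is precisely the class of all graphs that are H'-induced-minor-free for every graph H' of the form 2K1 ∨ H with H ∈ M_C. -/

import Mathlib

open SimpleGraph

namespace PaperSep

variable {V : Type} {W : Type}

/-- There is a walk from `a` to `b` in `G` all of whose vertices avoid the set `S`. -/
def ConnAvoid (G : SimpleGraph V) (S : Set V) (a b : V) : Prop :=
  ∃ p : G.Walk a b, ∀ v ∈ p.support, v ∉ S

/-- `S` is an `(a,b)`-separator of `G`. -/
def IsSep (G : SimpleGraph V) (a b : V) (S : Set V) : Prop :=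
  a ∉ S ∧ b ∉ S ∧ ¬ ConnAvoid G S a b

/-- `S` is a minimal `(a,b)`-separator of `G`. -/
def IsMinSep (G : SimpleGraph V) (a b : V) (S : Set V) : Prop :=
  IsSep G a b S ∧ ∀ T ⊂ S, ¬ IsSep G a b T

/-- `S` is a minimal separator of `G`. -/
def IsMinimalSeparator (G : SimpleGraph V) (S : Set V) : Prop :=
  ∃ a b : V, a ≠ b ∧ ¬ G.Adj a b ∧ IsMinSep G a b S

/-- `K` is a cutset of `G`, i.e. `G − K` is disconnected. -/
def IsCutset (G : SimpleGraph V) (K : Set V) : Prop :=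
  ∃ a b : V, a ∉ K ∧ b ∉ K ∧ ¬ ConnAvoid G K a b

/-- `K` is a minimal cutset of `G`. -/
def IsMinimalCutset (G : SimpleGraph V) (K : Set V) : Prop :=
  IsCutset G K ∧ ∀ T ⊂ K, ¬ IsCutset G T

/-- A class of finite graphs. -/
def GraphClass : Type 1 :=
  ∀ (α : Type) [Finite α], SimpleGraph α → Prop

/-- A class is hereditary if it is closed under isomorphism and induced subgraphs. -/
def Hereditary (C : GraphClass) : Prop :=
  ∀ (α : Type) [Finite α] (G : SimpleGraph α) (β : Type) [Finite β] (H : SimpleGraph β)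
    (s : Set α), Nonempty (H ≃g G.induce s) → C α G → C β H

/-- `G ∈ 𝒢_C` : every minimal separator of `G` induces a graph in `C`. -/
def MemGC (C : GraphClass) {α : Type} [Finite α] (G : SimpleGraph α) : Prop :=
  ∀ S : Set α, IsMinimalSeparator G S → C ↥S (G.induce S)

/-- The class `𝒢_C`. -/
def GCclass (C : GraphClass) : GraphClass :=
  fun α inst G => @MemGC C α inst G

/-- `S` is a union of `k` (possibly empty) cliques of `G`. -/
def UnionOfCliques (G : SimpleGraph V) (k : ℕ) (S : Set V) : Prop :=
  ∃ f : Fin k → Set V, (∀ i, G.IsClique (f i)) ∧ S = ⋃ i, f i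

/-- `G ∈ 𝒢_k` : every minimal separator of `G` is a union of `k` cliques. -/
def MemGk (k : ℕ) (G : SimpleGraph V) : Prop :=
  ∀ S : Set V, IsMinimalSeparator G S → UnionOfCliques G k S

/-- The class `𝒢_k`. -/
def Gkclass (k : ℕ) : GraphClass := fun _ _ G => MemGk k G

/-- The class `𝒞_k` of graphs whose vertex set is a union of `k` cliques. -/
def Ckclass (k : ℕ) : GraphClass := fun _ _ G => UnionOfCliques G k Set.univ

/-- An induced minor model of `H` in `G`. -/
def IsIMModel (G : SimpleGraph V) (H : SimpleGraph W) (X : W → Set V) : Prop :=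
  (∀ w, (X w).Nonempty) ∧
  (∀ u w : W, u ≠ w → Disjoint (X u) (X w)) ∧
  (∀ w, (G.induce (X w)).Connected) ∧
  (∀ u w : W, u ≠ w → (H.Adj u w ↔ ∃ a ∈ X u, ∃ b ∈ X w, G.Adj a b))

/-- `H` is an induced minor of `G`. -/
def IsInducedMinor (H : SimpleGraph W) (G : SimpleGraph V) : Prop :=
  ∃ X : W → Set V, IsIMModel G H X

/-- The class `C` is closed under induced minors. -/
def IMClosed (C : GraphClass) : Prop :=
  ∀ (α : Type) [Finite α] (G : SimpleGraph α) (β : Type) [Finite β] (H : SimpleGraph β),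
    C α G → IsInducedMinor H G → C β H

/-- The class `C` is closed under the addition of edges. -/
def EdgeAddClosed (C : GraphClass) : Prop :=
  ∀ (α : Type) [Finite α] (G : SimpleGraph α) (a b : α), a ≠ b → ¬ G.Adj a b →
    C α G → C α (G ⊔ SimpleGraph.edge a b)

/-- `G ∈ ℳ_C` : `G ∉ C` but every proper induced minor of `G` is in `C`.
(For finite graphs, the proper induced minors of `G` are exactly the induced minors of `G`
not isomorphic to `G`.) -/
def MemMC (C : GraphClass) {α : Type} [Finite α] (G : SimpleGraph α) : Prop :=
  ¬ C α G ∧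
  ∀ (β : Type) [Finite β] (H : SimpleGraph β),
    IsInducedMinor H G → IsEmpty (H ≃g G) → C β H

/-- The complete join of two graphs. -/
def join (G : SimpleGraph V) (H : SimpleGraph W) : SimpleGraph (V ⊕ W) :=
  SimpleGraph.fromRel (fun x y =>
    match x, y with
    | Sum.inl a, Sum.inl b => G.Adj a b
    | Sum.inr a, Sum.inr b => H.Adj a b
    | _, _ => True)

/-- The class `C` is closed under the addition of universal vertices (up to isomorphism). -/
def UnivAddClosed (C : GraphClass) : Prop :=
  ∀ (α : Type) [Finite α] (G : SimpleGraph α) (β : Type) [Finite β] (H : SimpleGraph β),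
    C α G → Nonempty (H ≃g join (⊥ : SimpleGraph (Fin 1)) G) → C β H

/-- `G` has a universal vertex. -/
def HasUniversalVertex (G : SimpleGraph V) : Prop :=
  ∃ v : V, ∀ w : V, w ≠ v → G.Adj v w



/-- `G` is a theta: two nonadjacent vertices joined by three internally disjoint induced
paths of length at least two, with no other vertices or edges
(equivalently, a subdivision of `K_{2,3}`). -/
def IsTheta (G : SimpleGraph V) : Prop :=
  ∃ (a b : V) (P₁ P₂ P₃ : G.Walk a b),
    a ≠ b ∧
    P₁.IsPath ∧ P₂.IsPath ∧ P₃.IsPath ∧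
    2 ≤ P₁.length ∧ 2 ≤ P₂.length ∧ 2 ≤ P₃.length ∧
    (∀ v : V, v ∈ P₁.support → v ∈ P₂.support → v = a ∨ v = b) ∧
    (∀ v : V, v ∈ P₁.support → v ∈ P₃.support → v = a ∨ v = b) ∧
    (∀ v : V, v ∈ P₂.support → v ∈ P₃.support → v = a ∨ v = b) ∧
    (∀ v : V, v ∈ P₁.support ∨ v ∈ P₂.support ∨ v ∈ P₃.support) ∧
    (∀ u v : V, G.Adj u v ↔
      s(u, v) ∈ P₁.edges ∨ s(u, v) ∈ P₂.edges ∨ s(u, v) ∈ P₃.edges)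

/-- `G` is a pyramid: an apex `a` joined to a triangle `b₁b₂b₃` by three paths sharing only
`a`, at least two of which have length at least two, with no other vertices or edges. -/
def IsPyramid (G : SimpleGraph V) : Prop :=
  ∃ (a b₁ b₂ b₃ : V) (P₁ : G.Walk a b₁) (P₂ : G.Walk a b₂) (P₃ : G.Walk a b₃),
    G.Adj b₁ b₂ ∧ G.Adj b₁ b₃ ∧ G.Adj b₂ b₃ ∧
    P₁.IsPath ∧ P₂.IsPath ∧ P₃.IsPath ∧
    1 ≤ P₁.length ∧ 1 ≤ P₂.length ∧ 1 ≤ P₃.length ∧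
    ((2 ≤ P₁.length ∧ 2 ≤ P₂.length) ∨ (2 ≤ P₁.length ∧ 2 ≤ P₃.length) ∨
      (2 ≤ P₂.length ∧ 2 ≤ P₃.length)) ∧
    (∀ v : V, v ∈ P₁.support → v ∈ P₂.support → v = a) ∧
    (∀ v : V, v ∈ P₁.support → v ∈ P₃.support → v = a) ∧
    (∀ v : V, v ∈ P₂.support → v ∈ P₃.support → v = a) ∧
    (∀ v : V, v ∈ P₁.support ∨ v ∈ P₂.support ∨ v ∈ P₃.support) ∧
    (∀ u v : V, G.Adj u v ↔
      s(u, v) ∈ P₁.edges ∨ s(u, v) ∈ P₂.edges ∨ s(u, v) ∈ P₃.edges ∨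
      s(u, v) = s(b₁, b₂) ∨ s(u, v) = s(b₁, b₃) ∨ s(u, v) = s(b₂, b₃))

/-- `G` is a prism: two disjoint triangles joined by three pairwise disjoint paths, with no
other vertices or edges. -/
def IsPrism (G : SimpleGraph V) : Prop :=
  ∃ (a₁ a₂ a₃ b₁ b₂ b₃ : V) (P₁ : G.Walk a₁ b₁) (P₂ : G.Walk a₂ b₂) (P₃ : G.Walk a₃ b₃),
    G.Adj a₁ a₂ ∧ G.Adj a₁ a₃ ∧ G.Adj a₂ a₃ ∧
    G.Adj b₁ b₂ ∧ G.Adj b₁ b₃ ∧ G.Adj b₂ b₃ ∧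
    P₁.IsPath ∧ P₂.IsPath ∧ P₃.IsPath ∧
    1 ≤ P₁.length ∧ 1 ≤ P₂.length ∧ 1 ≤ P₃.length ∧
    (∀ v : V, v ∈ P₁.support → v ∈ P₂.support → False) ∧
    (∀ v : V, v ∈ P₁.support → v ∈ P₃.support → False) ∧
    (∀ v : V, v ∈ P₂.support → v ∈ P₃.support → False) ∧
    (∀ v : V, v ∈ P₁.support ∨ v ∈ P₂.support ∨ v ∈ P₃.support) ∧
    (∀ u v : V, G.Adj u v ↔
      s(u, v) ∈ P₁.edges ∨ s(u, v) ∈ P₂.edges ∨ s(u, v) ∈ P₃.edges ∨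
      s(u, v) = s(a₁, a₂) ∨ s(u, v) = s(a₁, a₃) ∨ s(u, v) = s(a₂, a₃) ∨
      s(u, v) = s(b₁, b₂) ∨ s(u, v) = s(b₁, b₃) ∨ s(u, v) = s(b₂, b₃))

/-- `G` is a long prism: a prism other than the complement of `C₆`, i.e. a prism in which at
least one of the three paths has length at least two. -/
def IsLongPrism (G : SimpleGraph V) : Prop :=
  ∃ (a₁ a₂ a₃ b₁ b₂ b₃ : V) (P₁ : G.Walk a₁ b₁) (P₂ : G.Walk a₂ b₂) (P₃ : G.Walk a₃ b₃),
    G.Adj a₁ a₂ ∧ G.Adj a₁ a₃ ∧ G.Adj a₂ a₃ ∧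
    G.Adj b₁ b₂ ∧ G.Adj b₁ b₃ ∧ G.Adj b₂ b₃ ∧
    P₁.IsPath ∧ P₂.IsPath ∧ P₃.IsPath ∧
    1 ≤ P₁.length ∧ 1 ≤ P₂.length ∧ 1 ≤ P₃.length ∧
    (2 ≤ P₁.length ∨ 2 ≤ P₂.length ∨ 2 ≤ P₃.length) ∧
    (∀ v : V, v ∈ P₁.support → v ∈ P₂.support → False) ∧
    (∀ v : V, v ∈ P₁.support → v ∈ P₃.support → False) ∧
    (∀ v : V, v ∈ P₂.support → v ∈ P₃.support → False) ∧
    (∀ v : V, v ∈ P₁.support ∨ v ∈ P₂.support ∨ v ∈ P₃.support) ∧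
    (∀ u v : V, G.Adj u v ↔
      s(u, v) ∈ P₁.edges ∨ s(u, v) ∈ P₂.edges ∨ s(u, v) ∈ P₃.edges ∨
      s(u, v) = s(a₁, a₂) ∨ s(u, v) = s(a₁, a₃) ∨ s(u, v) = s(a₂, a₃) ∨
      s(u, v) = s(b₁, b₂) ∨ s(u, v) = s(b₁, b₃) ∨ s(u, v) = s(b₂, b₃))

/-- `G` is a wheel: a hole (chordless cycle of length at least four) together with one
additional vertex having at least three neighbors on the hole. -/
def IsWheel (G : SimpleGraph V) : Prop :=
  ∃ (v x : V) (c : G.Walk x x),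
    c.IsCycle ∧ 4 ≤ c.length ∧ v ∉ c.support ∧
    (∀ u : V, u = v ∨ u ∈ c.support) ∧
    (∀ u w : V, u ∈ c.support → w ∈ c.support → G.Adj u w → s(u, w) ∈ c.edges) ∧
    3 ≤ {u : V | u ∈ c.support ∧ G.Adj v u}.ncard

/-- `G` is a broken wheel: a wheel in which the neighbors of the additional vertex induce a
disconnected subgraph of the hole. -/
def IsBrokenWheel (G : SimpleGraph V) : Prop :=
  ∃ (v x : V) (c : G.Walk x x),
    c.IsCycle ∧ 4 ≤ c.length ∧ v ∉ c.support ∧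
    (∀ u : V, u = v ∨ u ∈ c.support) ∧
    (∀ u w : V, u ∈ c.support → w ∈ c.support → G.Adj u w → s(u, w) ∈ c.edges) ∧
    3 ≤ {u : V | u ∈ c.support ∧ G.Adj v u}.ncard ∧
    ¬ (G.induce {u : V | u ∈ c.support ∧ G.Adj v u}).Connected

/-- `G` is diamond-free: it has no induced subgraph isomorphic to `K₄` minus an edge. -/
def DiamondFree (G : SimpleGraph V) : Prop :=
  ¬ ∃ a b c d : V, c ≠ d ∧ G.Adj a b ∧ G.Adj a c ∧ G.Adj a d ∧ G.Adj b c ∧ G.Adj b d ∧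
    ¬ G.Adj c d

/-- The short `n`-prism: two `n`-vertex cliques joined by a perfect matching. -/
def completePrism (n : ℕ) : SimpleGraph (Fin n ⊕ Fin n) :=
  SimpleGraph.fromRel (fun x y =>
    match x, y with
    | Sum.inl _, Sum.inl _ => True
    | Sum.inr _, Sum.inr _ => True
    | Sum.inl i, Sum.inr j => i = j
    | Sum.inr i, Sum.inl j => i = j)

/-- `G` is a complete prism, i.e. a short `n`-prism for some `n ≥ 3`. -/
def IsCompletePrism (G : SimpleGraph V) : Prop :=
  ∃ n : ℕ, 3 ≤ n ∧ Nonempty (G ≃g completePrism n)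

/-- `G` is a cycle. -/
def IsCycleGraph (G : SimpleGraph V) : Prop :=
  ∃ n : ℕ, 3 ≤ n ∧ Nonempty (G ≃g cycleGraph n)

/-- `G` is a complete graph. -/
def IsCompleteGraph (G : SimpleGraph V) : Prop :=
  ∀ u v : V, u ≠ v → G.Adj u v

/-- `G` has a clique-cutset. -/
def HasCliqueCutset (G : SimpleGraph V) : Prop :=
  ∃ K : Set V, G.IsClique K ∧ IsCutset G K

/-!
Picking one vertex in each branch set of a model of `H` in `G` gives an injection along which `G`
pulls back to a subgraph of `H`; so `H` is an induced subgraph of `G` with edges added, and a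
hereditary class closed under edge addition is closed under induced minors.

If `X` models `2K₁ ∨ H` in `G` with apex branch sets `A ∋ a` and `B ∋ b`, there are no `A`–`B`
edges, so some minimal `(a,b)`-separator `S` avoids `A ∪ B`; it meets every other branch set,
each being adjacent to both `A` and `B`. Hence `H` comes from `G[S]` in the same way, and
`G[S] ∈ C` would force `H ∈ C`. Conversely, if `G[S] ∉ C` for a minimal `(a,b)`-separator `S`,
then `G[S]` has an induced minor `H ∈ ℳ_C` (one with fewest vertices); every vertex of `S` has
a neighbour in the components of `G - S` containing `a` and `b`, so these two components and a
model of `H` in `G[S]` form a model of `2K₁ ∨ H` in `G`. As induced minors compose, this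
characterisation makes `𝒢_C` closed under induced minors.
-/

variable {U : Type}

section Join

variable {G : SimpleGraph V} {H : SimpleGraph W}

@[simp]
lemma join_adj_inl_inl {a a' : V} : (join G H).Adj (.inl a) (.inl a') ↔ G.Adj a a' := by
  simp only [join, fromRel_adj, ne_eq, Sum.inl.injEq]
  exact ⟨fun h => h.2.elim id G.adj_symm, fun h => ⟨h.ne, .inl h⟩⟩

@[simp]
lemma join_adj_inr_inr {w w' : W} : (join G H).Adj (.inr w) (.inr w') ↔ H.Adj w w' := by
  simp only [join, fromRel_adj, ne_eq, Sum.inr.injEq]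
  exact ⟨fun h => h.2.elim id H.adj_symm, fun h => ⟨h.ne, .inl h⟩⟩

@[simp]
lemma join_adj_inl_inr {a : V} {w : W} : (join G H).Adj (.inl a) (.inr w) := by
  simp [join]

@[simp]
lemma join_adj_inr_inl {a : V} {w : W} : (join G H).Adj (.inr w) (.inl a) := by
  simp [join]

end Join

section Separators

variable {G : SimpleGraph V} {S : Set V} {a b : V}

lemma ConnAvoid.symm (h : ConnAvoid G S a b) : ConnAvoid G S b a := by
  obtain ⟨p, hp⟩ := h
  exact ⟨p.reverse, fun v hv => hp v (by simpa using hv)⟩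

lemma connAvoid_of_connected {D : Set V} (hD : (G.induce D).Connected) (hDS : Disjoint D S)
    {x y : V} (hx : x ∈ D) (hy : y ∈ D) : ConnAvoid G S x y := by
  obtain ⟨p⟩ := hD.preconnected ⟨x, hx⟩ ⟨y, hy⟩
  refine ⟨p.map (Embedding.induce D).toHom, fun v hv => ?_⟩
  obtain ⟨u, -, rfl⟩ := List.mem_map.mp (Walk.support_map _ p ▸ hv)
  exact hDS.notMem_of_mem_left u.2

lemma IsSep.symm (h : IsSep G a b S) : IsSep G b a S :=
  ⟨h.2.1, h.1, fun c => h.2.2 c.symm⟩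

lemma IsMinSep.symm (h : IsMinSep G a b S) : IsMinSep G b a S :=
  ⟨h.1.symm, fun T hT hsep => h.2 T hT hsep.symm⟩

lemma IsSep.inter_nonempty_of_connected (hS : IsSep G a b S) {D : Set V}
    (hD : (G.induce D).Connected) (ha : a ∈ D) (hb : b ∈ D) : (D ∩ S).Nonempty := by
  by_contra h
  exact hS.2.2 <| connAvoid_of_connected hD
    (Set.disjoint_iff_inter_eq_empty.mpr (Set.not_nonempty_iff_eq_empty.mp h)) ha hb

lemma isSep_compl_union {A B : Set V} (ha : a ∈ A) (hb : b ∈ B) (hAB : Disjoint A B)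
    (hnadj : ∀ x ∈ A, ∀ y ∈ B, ¬ G.Adj x y) : IsSep G a b (A ∪ B)ᶜ := by
  refine ⟨fun h => h (.inl ha), fun h => h (.inr hb), fun ⟨p, hp⟩ => ?_⟩
  obtain ⟨d, hd, hdA, hdA'⟩ := p.exists_boundary_dart A ha (hAB.notMem_of_mem_right hb)
  have hdB : d.snd ∈ B :=
    (not_not.mp (hp _ (p.dart_snd_mem_support_of_mem_darts hd))).resolve_left hdA'
  exact hnadj _ hdA _ hdB d.adj

lemma exists_isMinSep_subset [Finite V] {T : Set V} (hT : IsSep G a b T) :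
    ∃ S ⊆ T, IsMinSep G a b S := by
  obtain ⟨S, hST, hS⟩ := (Set.toFinite {T | IsSep G a b T}).exists_le_minimal hT
  exact ⟨S, hST, hS.prop, fun T hTS hT => hTS.not_ge (hS.le_of_le hT hTS.le)⟩

def sepComponent (G : SimpleGraph V) (S : Set V) (a : V) : Set V :=
  {v | ConnAvoid G S a v}

lemma mem_sepComponent_self (ha : a ∉ S) : a ∈ sepComponent G S a :=
  ⟨.nil, fun _ hv => List.mem_singleton.mp hv ▸ ha⟩

lemma sepComponent_disjoint : Disjoint (sepComponent G S a) S :=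
  Set.disjoint_left.mpr fun _ ⟨p, hp⟩ => hp _ p.end_mem_support

lemma subset_sepComponent {D : Set V} (hD : (G.induce D).Connected) (hDS : Disjoint D S)
    (ha : a ∈ D) : D ⊆ sepComponent G S a :=
  fun _ hv => connAvoid_of_connected hD hDS ha hv

lemma mem_sepComponent_of_adj {x y : V} (hx : x ∈ sepComponent G S a) (hxy : G.Adj x y)
    (hy : y ∉ S) : y ∈ sepComponent G S a := by
  obtain ⟨p, hp⟩ := hx
  refine ⟨p.concat hxy, fun v hv => ?_⟩
  rcases List.mem_append.mp (p.support_concat hxy ▸ hv) with hv | hv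
  exacts [hp v hv, List.mem_singleton.mp hv ▸ hy]

lemma connected_induce_sepComponent (ha : a ∉ S) :
    (G.induce (sepComponent G S a)).Connected := by
  refine induce_connected_of_patches a (mem_sepComponent_self ha) fun {_} ⟨p, hp⟩ => ?_
  have hsub : {u | u ∈ p.support} ⊆ sepComponent G S a :=
    subset_sepComponent p.connected_induce_support (Set.disjoint_left.mpr hp)
      p.start_mem_support
  exact ⟨_, hsub, p.start_mem_support, p.end_mem_support,
    p.connected_induce_support.preconnected _ _⟩

lemma IsSep.disjoint_sepComponent (hS : IsSep G a b S) :
    Disjoint (sepComponent G S a) (sepComponent G S b) := by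
  refine Set.disjoint_left.mpr fun x hxa hxb => ?_
  have hconn := induce_union_connected (connected_induce_sepComponent hS.1).preconnected
    (connected_induce_sepComponent hS.2.1).preconnected ⟨x, hxa, hxb⟩
  exact hS.2.2 <| connAvoid_of_connected hconn
    (sepComponent_disjoint.union_left sepComponent_disjoint)
    (.inl (mem_sepComponent_self hS.1)) (.inr (mem_sepComponent_self hS.2.1))

lemma IsSep.not_adj_sepComponent (hS : IsSep G a b S) {x y : V}
    (hx : x ∈ sepComponent G S a) (hy : y ∈ sepComponent G S b) : ¬ G.Adj x y := fun hxy =>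
  hS.2.2 <| connAvoid_of_connected
    (connected_induce_union (connected_induce_sepComponent hS.1).preconnected
      (connected_induce_sepComponent hS.2.1).preconnected hx hy hxy)
    (sepComponent_disjoint.union_left sepComponent_disjoint)
    (.inl (mem_sepComponent_self hS.1)) (.inr (mem_sepComponent_self hS.2.1))

lemma IsMinSep.exists_adj_of_mem (hS : IsMinSep G a b S) {s : V} (hs : s ∈ S) :
    ∃ v ∈ sepComponent G S a, G.Adj v s := by
  obtain ⟨⟨haS, hbS, hsep⟩, hmin⟩ := hS
  obtain ⟨p, hp⟩ : ConnAvoid G (S \ {s}) a b := by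
    by_contra h
    exact hmin _ (Set.sdiff_singleton_ssubset.mpr hs) ⟨fun h => haS h.1, fun h => hbS h.1, h⟩
  -- the walk leaves the component of `a` through a vertex of `S`, which can only be `s`
  obtain ⟨d, hd, hfst, hsnd⟩ := p.exists_boundary_dart _ (mem_sepComponent_self haS) hsep
  have hds : d.snd = s := by
    by_contra hne
    exact hsnd <| mem_sepComponent_of_adj hfst d.adj
      fun h => hp _ (p.dart_snd_mem_support_of_mem_darts hd) ⟨h, hne⟩
  exact ⟨d.fst, hfst, hds ▸ d.adj⟩

end Separators

namespace IsIMModel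

variable {G : SimpleGraph V} {H : SimpleGraph W} {X : W → Set V}

lemma eq_of_mem (hX : IsIMModel G H X) {x : V} {u w : W} (hu : x ∈ X u) (hw : x ∈ X w) :
    u = w := by
  by_contra h
  exact (hX.2.1 u w h).notMem_of_mem_left hu hw

lemma exists_embedding_mem (hX : IsIMModel G H X) : ∃ f : W ↪ V, ∀ w, f w ∈ X w := by
  choose f hf using hX.1
  exact ⟨⟨f, fun u w h => hX.eq_of_mem (hf u) (h ▸ hf w)⟩, hf⟩

lemma comap_le (hX : IsIMModel G H X) {f : W → V} (hf : ∀ w, f w ∈ X w) : G.comap f ≤ H :=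
  fun u w huw => (hX.2.2.2 u w fun h => G.irrefl (h ▸ huw)).mpr ⟨_, hf u, _, hf w, huw⟩

lemma image_val {s : Set V} {Y : W → Set s} (hY : IsIMModel (G.induce s) H Y) :
    IsIMModel G H (fun w => Subtype.val '' Y w) := by
  refine ⟨fun w => (hY.1 w).image _, fun u w huw => ?_, fun w => ?_, fun u w huw => ?_⟩
  · exact (Set.disjoint_image_iff Subtype.val_injective).mpr (hY.2.1 u w huw)
  · let f : (G.induce s).induce (Y w) →g G.induce (Subtype.val '' Y w) :=
      ⟨fun x => ⟨x.1.1, x.1, x.2, rfl⟩, id⟩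
    refine (hY.2.2.1 w).map f ?_
    rintro ⟨_, x, hx, rfl⟩
    exact ⟨⟨x, hx⟩, rfl⟩
  · rw [hY.2.2.2 u w huw]
    simp

lemma comp_inr {K : SimpleGraph U} {X : U ⊕ W → Set V} (hX : IsIMModel G (join K H) X) :
    IsIMModel G H (X ∘ Sum.inr) :=
  ⟨fun w => hX.1 _, fun u w huw => hX.2.1 _ _ (Sum.inr_injective.ne huw),
    fun w => hX.2.2.1 _, fun u w huw => by
      simpa using hX.2.2.2 (.inr u) (.inr w) (Sum.inr_injective.ne huw)⟩

lemma exists_adj_inl_inr {K : SimpleGraph U} {X : U ⊕ W → Set V}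
    (hX : IsIMModel G (join K H) X) (u : U) (w : W) :
    ∃ x ∈ X (.inl u), ∃ y ∈ X (.inr w), G.Adj x y :=
  (hX.2.2.2 _ _ Sum.inl_ne_inr).mp join_adj_inl_inr

lemma join {K : SimpleGraph U} {Y : U → Set V} (hY : IsIMModel G K Y) (hX : IsIMModel G H X)
    (hdisj : ∀ u w, Disjoint (Y u) (X w))
    (hadj : ∀ u w, ∃ x ∈ Y u, ∃ y ∈ X w, G.Adj x y) :
    IsIMModel G (PaperSep.join K H) (Sum.elim Y X) := by
  refine ⟨?_, ?_, ?_, ?_⟩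
  · rintro (u | w)
    exacts [hY.1 u, hX.1 w]
  · rintro (u | w) (u' | w') hne
    · exact hY.2.1 u u' (ne_of_apply_ne _ hne)
    · exact hdisj u w'
    · exact (hdisj u' w).symm
    · exact hX.2.1 w w' (ne_of_apply_ne _ hne)
  · rintro (u | w)
    exacts [hY.2.2.1 u, hX.2.2.1 w]
  · rintro (u | w) (u' | w') hne
    · simpa using hY.2.2.2 u u' (ne_of_apply_ne _ hne)
    · simpa using hadj u w'
    · obtain ⟨x, hx, y, hy, hxy⟩ := hadj u' w
      simpa using ⟨y, hy, x, hx, hxy.symm⟩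
    · simpa using hX.2.2.2 w w' (ne_of_apply_ne _ hne)

lemma connected_induce_biUnion (hX : IsIMModel G H X) {T : Set W}
    (hT : (H.induce T).Connected) : (G.induce (⋃ w ∈ T, X w)).Connected := by
  have hmem {w : W} (hw : w ∈ T) : X w ⊆ ⋃ w ∈ T, X w := Set.subset_biUnion_of_mem hw
  have hwithin {w : W} (hw : w ∈ T) {x y : V} (hx : x ∈ X w) (hy : y ∈ X w) :
      (G.induce (⋃ w ∈ T, X w)).Reachable ⟨x, hmem hw hx⟩ ⟨y, hmem hw hy⟩ :=
    ((hX.2.2.1 w).preconnected ⟨x, hx⟩ ⟨y, hy⟩).map (G.induceHomOfLE (hmem hw)).toHom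
  have hwalk {w w' : T} (q : (H.induce T).Walk w w') {x x' : V} (hx : x ∈ X w)
      (hx' : x' ∈ X w') :
      (G.induce (⋃ w ∈ T, X w)).Reachable ⟨x, hmem w.2 hx⟩ ⟨x', hmem w'.2 hx'⟩ := by
    induction q generalizing x with
    | @nil w => exact hwithin w.2 hx hx'
    | @cons w v w' hwv q ih =>
      obtain ⟨y, hy, z, hz, hyz⟩ := (hX.2.2.2 _ _ (Subtype.coe_injective.ne hwv.ne)).mp hwv
      have hyz' : (G.induce _).Adj ⟨y, hmem w.2 hy⟩ ⟨z, hmem v.2 hz⟩ := hyz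
      exact (hwithin w.2 hx hy).trans (hyz'.reachable.trans (ih hz hx'))
  obtain ⟨w₀⟩ := hT.nonempty
  obtain ⟨x₀, hx₀⟩ := hX.1 w₀
  refine (connected_iff_exists_forall_reachable _).mpr ⟨⟨x₀, hmem w₀.2 hx₀⟩, ?_⟩
  rintro ⟨x, hx⟩
  obtain ⟨w, hw, hxw⟩ := Set.mem_iUnion₂.mp hx
  exact hwalk (hT.preconnected w₀ ⟨w, hw⟩).some hx₀ hxw

end IsIMModel

lemma isIMModel_bot_pair {G : SimpleGraph V} {A B : Set V} (hA : (G.induce A).Connected)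
    (hB : (G.induce B).Connected) (hAB : Disjoint A B)
    (hnadj : ∀ x ∈ A, ∀ y ∈ B, ¬ G.Adj x y) :
    IsIMModel G (⊥ : SimpleGraph (Fin 2)) ![A, B] := by
  refine ⟨?_, ?_, ?_, ?_⟩
  · simpa [Fin.forall_fin_two] using
      ⟨Set.nonempty_coe_sort.mp hA.nonempty, Set.nonempty_coe_sort.mp hB.nonempty⟩
  · simpa [Fin.forall_fin_two] using ⟨hAB, hAB.symm⟩
  · simpa [Fin.forall_fin_two] using ⟨hA, hB⟩
  · simp only [Fin.forall_fin_two]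
    exact ⟨⟨by simp, by simpa using hnadj⟩,
      by simpa using fun x hx y hy h => hnadj y hy x hx h.symm, by simp⟩

namespace IsInducedMinor

variable {G : SimpleGraph V} {H : SimpleGraph W}

protected lemma refl (G : SimpleGraph V) : IsInducedMinor G G := by
  refine ⟨fun v => {v}, fun v => Set.singleton_nonempty v, fun u w huw => ?_, fun v => ?_,
    fun u w _ => ?_⟩
  · exact Set.disjoint_singleton.mpr huw
  · rw [induce_singleton_eq_top]
    exact connected_top
  · simp

lemma trans {K : SimpleGraph U} (hKH : IsInducedMinor K H) (hHG : IsInducedMinor H G) :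
    IsInducedMinor K G := by
  obtain ⟨Y, hY⟩ := hKH
  obtain ⟨X, hX⟩ := hHG
  refine ⟨fun u => ⋃ w ∈ Y u, X w, fun u => ?_, fun u u' huu' => ?_,
    fun u => hX.connected_induce_biUnion (hY.2.2.1 u), fun u u' huu' => ?_⟩
  · obtain ⟨w, hw⟩ := hY.1 u
    exact (hX.1 w).mono (Set.subset_biUnion_of_mem hw)
  · simp only [Set.disjoint_iUnion_left, Set.disjoint_iUnion_right]
    exact fun w hw w' hw' =>
      hX.2.1 w' w fun h => (hY.2.1 u u' huu').notMem_of_mem_left hw' (h ▸ hw)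
  · simp only [hY.2.2.2 u u' huu', Set.mem_iUnion₂]
    constructor
    · rintro ⟨w, hw, w', hw', hww'⟩
      obtain ⟨x, hx, y, hy, hxy⟩ := (hX.2.2.2 w w' hww'.ne).mp hww'
      exact ⟨x, ⟨w, hw, hx⟩, y, ⟨w', hw', hy⟩, hxy⟩
    · rintro ⟨x, ⟨w, hw, hx⟩, y, ⟨w', hw', hy⟩, hxy⟩
      have hww' : w ≠ w' := fun h => (hY.2.1 u u' huu').notMem_of_mem_left hw (h ▸ hw')
      exact ⟨w, hw, w', hw', (hX.2.2.2 w w' hww').mpr ⟨x, hx, y, hy, hxy⟩⟩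

lemma card_le [Finite V] (h : IsInducedMinor H G) : Nat.card W ≤ Nat.card V := by
  obtain ⟨X, hX⟩ := h
  obtain ⟨f, -⟩ := hX.exists_embedding_mem
  exact Nat.card_le_card_of_injective f f.injective

lemma nonempty_iso_of_card_eq [Finite V] (h : IsInducedMinor H G)
    (hcard : Nat.card W = Nat.card V) : Nonempty (H ≃g G) := by
  obtain ⟨X, hX⟩ := h
  obtain ⟨f, hf⟩ := hX.exists_embedding_mem
  have : Finite W := .of_injective f f.injective
  have hbij : Function.Bijective f :=
    (Nat.bijective_iff_injective_and_card f).mpr ⟨f.injective, hcard⟩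
  have hX_eq {w : W} {x : V} (hx : x ∈ X w) : x = f w := by
    obtain ⟨w', rfl⟩ := hbij.2 x
    rw [hX.eq_of_mem hx (hf w')]
  refine ⟨⟨Equiv.ofBijective f hbij, fun {u w} => ?_⟩⟩
  simp only [Equiv.ofBijective_apply]
  rcases eq_or_ne u w with rfl | huw
  · simp
  rw [hX.2.2.2 u w huw]
  constructor
  · exact fun h => ⟨_, hf u, _, hf w, h⟩
  · rintro ⟨x, hx, y, hy, hxy⟩
    rwa [hX_eq hx, hX_eq hy] at hxy

end IsInducedMinor

section Classes

variable {C : GraphClass}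

lemma EdgeAddClosed.mem_of_le (hE : EdgeAddClosed C) {α : Type} [Finite α]
    {G G' : SimpleGraph α} (hle : G ≤ G') (hG : C α G) : C α G' := by
  induction G' using WellFoundedLT.induction with
  | _ G' ih =>
  rcases hle.eq_or_lt with rfl | hlt
  · exact hG
  obtain ⟨a, b, hab, hnab⟩ : ∃ a b, G'.Adj a b ∧ ¬ G.Adj a b := by
    by_contra! h
    exact hlt.not_ge fun a b => h a b
  have hedge : edge a b ≤ G' := (edge_le_iff G').mpr (.inr hab)
  have hedge_ne : edge a b ≠ ⊥ := fun h => by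
    simpa [h] using (edge_adj a b a b).mpr ⟨.inl ⟨rfl, rfl⟩, hab.ne⟩
  have hC' : C α (G' \ edge a b) :=
    ih _ (sdiff_lt hedge hedge_ne) (le_sdiff.mpr ⟨hle, (disjoint_edge G).mpr hnab⟩)
  have := hE α _ a b hab.ne (by simp [sdiff_adj, edge_adj, hab.ne]) hC'
  rwa [sdiff_sup_cancel hedge] at this

lemma Hereditary.of_comap_le (hC : Hereditary C) (hE : EdgeAddClosed C) {α β : Type}
    [Finite α] [Finite β] {G : SimpleGraph α} {H : SimpleGraph β} (f : β ↪ α)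
    (hle : G.comap f ≤ H) (hG : C α G) : C β H := by
  let e : H ↪g G ⊔ H.map f :=
    ⟨f, fun {u w} => by simpa [f.injective.eq_iff] using fun h => hle h⟩
  exact hC α _ β H (Set.range f) ⟨e.isoInduceRange⟩
    (hE.mem_of_le le_sup_left hG)

theorem imClosed_of_hereditary_of_edgeAddClosed (hC : Hereditary C) (hE : EdgeAddClosed C) :
    IMClosed C := by
  rintro α _ G β _ H hG ⟨X, hX⟩
  obtain ⟨f, hf⟩ := hX.exists_embedding_mem
  exact hC.of_comap_le hE f (hX.comap_le hf) hG

lemma exists_memMC_isInducedMinor {β : Type} [Finite β] {H : SimpleGraph β} (hH : ¬ C β H) :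
    ∃ (W : Type) (_ : Finite W) (H' : SimpleGraph W), MemMC C H' ∧ IsInducedMinor H' H := by
  generalize hn : Nat.card β = n
  induction n using Nat.strong_induction_on generalizing β with
  | _ n ih =>
  by_cases hM : MemMC C H
  · exact ⟨β, inferInstance, H, hM, .refl H⟩
  simp only [MemMC, hH, not_false_eq_true, true_and, not_forall] at hM
  obtain ⟨γ, _, K, hKH, hiso, hK⟩ := hM
  have hlt : Nat.card γ < n := hn ▸ hKH.card_le.lt_of_ne fun h =>
    (not_isEmpty_iff.mpr (hKH.nonempty_iso_of_card_eq h)) hiso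
  obtain ⟨W, _, H', hH', hH'K⟩ := ih _ hlt hK rfl
  exact ⟨W, inferInstance, H', hH', hH'K.trans hKH⟩

end Classes

section GC

variable {C : GraphClass}

theorem not_isInducedMinor_join_of_memGC (hC : Hereditary C) (hE : EdgeAddClosed C)
    {α : Type} [Finite α] {G : SimpleGraph α} (hG : MemGC C G) {W : Type} [Finite W]
    {H : SimpleGraph W} (hH : MemMC C H) :
    ¬ IsInducedMinor (join (⊥ : SimpleGraph (Fin 2)) H) G := by
  rintro ⟨X, hX⟩
  obtain ⟨a, ha⟩ := hX.1 (.inl 0)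
  obtain ⟨b, hb⟩ := hX.1 (.inl 1)
  have h01 : (Sum.inl 0 : Fin 2 ⊕ W) ≠ .inl 1 := by simp
  have hnadj : ∀ x ∈ X (.inl 0), ∀ y ∈ X (.inl 1), ¬ G.Adj x y :=
    fun x hx y hy hxy => by simpa using (hX.2.2.2 _ _ h01).mpr ⟨x, hx, y, hy, hxy⟩
  have hAB := hX.2.1 _ _ h01
  obtain ⟨S, hST, hS⟩ := exists_isMinSep_subset (isSep_compl_union ha hb hAB hnadj)
  -- `X (inl 0) ∪ X (inr w) ∪ X (inl 1)` is connected and contains `a` and `b`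
  have hmeet (w : W) : (X (.inr w) ∩ S).Nonempty := by
    obtain ⟨x, hx, y, hy, hxy⟩ := hX.exists_adj_inl_inr 0 w
    obtain ⟨x', hx', y', hy', hxy'⟩ := hX.exists_adj_inl_inr 1 w
    have hAw := connected_induce_union (hX.2.2.1 _).preconnected (hX.2.2.1 _).preconnected
      hx hy hxy
    have hD := connected_induce_union hAw.preconnected (hX.2.2.1 _).preconnected
      (.inr hy') hx' hxy'.symm
    obtain ⟨v, hvD, hvS⟩ := hS.1.inter_nonempty_of_connected hD (.inl (.inl ha)) (.inr hb)
    rcases hvD with (hvA | hv) | hvB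
    · exact absurd (.inl hvA) (hST hvS)
    · exact ⟨v, hv, hvS⟩
    · exact absurd (.inr hvB) (hST hvS)
  choose f hfX hfS using hmeet
  let f' : W ↪ S := ⟨fun w => ⟨f w, hfS w⟩, fun u w h => hX.comp_inr.eq_of_mem (hfX u) <| by
    rw [show f u = f w from congrArg Subtype.val h]
    exact hfX w⟩
  exact hH.1 <| hC.of_comap_le hE f' (G := G.induce S)
    (fun u w (h : G.Adj (f u) (f w)) => hX.comp_inr.comap_le hfX h)
    (hG S ⟨a, b, hAB.ne_of_mem ha hb, hnadj a ha b hb, hS⟩)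

theorem memGC_of_forall_not_isInducedMinor_join {α : Type} [Finite α] {G : SimpleGraph α}
    (hforb : ∀ (W : Type) [Finite W] (H : SimpleGraph W), MemMC C H →
      ¬ IsInducedMinor (join (⊥ : SimpleGraph (Fin 2)) H) G) :
    MemGC C G := by
  rintro S ⟨a, b, -, -, hS⟩
  by_contra hSC
  obtain ⟨W, _, H, hH, Y, hY⟩ := exists_memMC_isInducedMinor hSC
  have hYS (w : W) : Subtype.val '' Y w ⊆ S := Subtype.coe_image_subset _ _
  refine hforb W H hH ⟨_, (isIMModel_bot_pair (connected_induce_sepComponent hS.1.1)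
    (connected_induce_sepComponent hS.1.2.1) hS.1.disjoint_sepComponent
    fun x hx y hy => hS.1.not_adj_sepComponent hx hy).join hY.image_val ?_ ?_⟩
  · simp only [Fin.forall_fin_two]
    exact ⟨fun w => sepComponent_disjoint.mono_right (hYS w),
      fun w => sepComponent_disjoint.mono_right (hYS w)⟩
  · intro i w
    obtain ⟨s, hs⟩ := hY.1 w
    fin_cases i
    · obtain ⟨v, hv, hvs⟩ := hS.exists_adj_of_mem s.2
      exact ⟨v, hv, s, ⟨s, hs, rfl⟩, hvs⟩
    · obtain ⟨v, hv, hvs⟩ := hS.symm.exists_adj_of_mem s.2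
      exact ⟨v, hv, s, ⟨s, hs, rfl⟩, hvs⟩

end GC

/-- if `C` is hereditary and closed under edge addition, then `C` and
`𝒢_C` are closed under induced minors, and `𝒢_C` is precisely the class of graphs with no
induced minor of the form `2K₁ ∨ H` with `H ∈ ℳ_C`. -/
theorem statement_4 (C : GraphClass) (hC : Hereditary C) (hE : EdgeAddClosed C) :
    IMClosed C ∧ IMClosed (GCclass C) ∧
    (∀ (V : Type) [Finite V] (G : SimpleGraph V),
      MemGC C G ↔
        ∀ (W : Type) [Finite W] (H : SimpleGraph W), MemMC C H →
          ¬ IsInducedMinor (join (⊥ : SimpleGraph (Fin 2)) H) G) := by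
  have hchar (V : Type) [Finite V] (G : SimpleGraph V) : MemGC C G ↔
      ∀ (W : Type) [Finite W] (H : SimpleGraph W), MemMC C H →
        ¬ IsInducedMinor (join (⊥ : SimpleGraph (Fin 2)) H) G :=
    ⟨fun hG _ _ _ hH => not_isInducedMinor_join_of_memGC hC hE hG hH,
      memGC_of_forall_not_isInducedMinor_join⟩
  refine ⟨imClosed_of_hereditary_of_edgeAddClosed hC hE, fun α _ G β _ H hG hHG => ?_, hchar⟩
  exact (hchar β H).2 fun W _ K hK hKH => (hchar α G).1 hG W K hK (hKH.trans hHG)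

end PaperSep
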